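/- arXiv:1311.3795 — 4 statements merged into one kernel-verified Lean document; each statement's English description precedes it below -/
import Mathlib

section
/- Let R be a commutative ring, h_1,...,h_m an R-regular sequence, h = h_1⋯h_m, and let Ω be a free R-module (e.g. the module of Kähler differentials of a convergent power series ring). If ω ∈ h^{-1}Ω satisfies dh ∧ ω ∈ Ω in the exterior algebra over R localized at h, then for every i = 1,...,m one has dh_i ∧ ω ∈ (h_i/h)Ω. Conversely, if dh_i ∧ ω ∈ (h_i/h)Ω for all i, then dh ∧ ω ∈ Ω. Hence the two defining conditions of logarithmic differential forms along the product h agree. -/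
/-!
Write `H = ∏ hᵢ`, `Hᵢ = ∏_{j ≠ i} hⱼ` and `xᵢ = dhᵢ ∧ η`. By the Leibniz rule
`dH ∧ η = ∑ᵢ Hᵢ • xᵢ`. If every `xᵢ` is divisible by `hᵢ`, every summand is divisible by `H`.
Conversely, if the sum is divisible by `H`, then modulo `hᵢ` all summands but the `i`-th
vanish, so `hᵢ ∣ Hᵢ • xᵢ`. In a local Noetherian ring a regular sequence stays regular under
permutation, so each `hⱼ` (`j ≠ i`), hence `Hᵢ`, is a non-zero-divisor modulo `hᵢ`. This
persists on the flat module `Λ Ω` (free, since `Ω` is) and yields `hᵢ ∣ xᵢ`.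
-/

open RingTheory.Sequence
open scoped Pointwise

theorem Derivation.leibniz_prod {k A N : Type*} [CommSemiring k] [CommSemiring A] [Algebra k A]
    [AddCommMonoid N] [Module A N] [Module k N] [IsScalarTower k A N]
    (D : Derivation k A N) {σ : Type*} [DecidableEq σ] (s : Finset σ) (f : σ → A) :
    D (∏ i ∈ s, f i) = ∑ i ∈ s, (∏ j ∈ s.erase i, f j) • D (f i) := by
  induction s using Finset.induction_on with
  | empty => simp
  | insert a s ha ih =>
    rw [Finset.prod_insert ha, D.leibniz, ih, Finset.sum_insert ha, Finset.erase_insert ha,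
      Finset.smul_sum, add_comm]
    congr 1
    refine Finset.sum_congr rfl fun i hi => ?_
    have hia : i ≠ a := fun hi' => ha (hi' ▸ hi)
    rw [Finset.erase_insert_of_ne hia.symm,
      Finset.prod_insert fun h => ha (Finset.mem_of_mem_erase h), smul_smul]

instance ExteriorAlgebra.instModuleFree {R M : Type*} [CommRing R] [AddCommGroup M]
    [Module R M] [Module.Free R M] : Module.Free R (ExteriorAlgebra R M) :=
  Module.Free.of_equiv (DirectSum.decomposeLinearEquiv fun i : ℕ => ⋀[R]^i M).symm

section SMulTop

variable {R N : Type*} [CommRing R] [AddCommGroup N] [Module R N]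

theorem Submodule.mem_smul_top_iff_exists_eq_smul {r : R} {x : N} :
    x ∈ r • (⊤ : Submodule R N) ↔ ∃ y, x = r • y := by
  simp only [Submodule.mem_smul_pointwise_iff_exists, Submodule.mem_top, true_and, eq_comm]

theorem Submodule.smul_mem_smul_top_of_dvd {u r : R} (hur : u ∣ r) (x : N) :
    r • x ∈ u • (⊤ : Submodule R N) := by
  obtain ⟨s, rfl⟩ := hur
  rw [mul_smul]
  exact Submodule.smul_mem_pointwise_smul _ _ _ trivial

theorem IsSMulRegular.mem_smul_top_of_smul_mem {a u : R}
    (ha : IsSMulRegular (QuotSMulTop u N) a) {x : N}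
    (hx : a • x ∈ u • (⊤ : Submodule R N)) :
    x ∈ u • (⊤ : Submodule R N) := by
  rw [← Submodule.Quotient.mk_eq_zero] at hx ⊢
  exact ha (by simpa using hx)

end SMulTop

section RegularSequence

variable {R : Type*} [CommRing R]

theorem RingTheory.Sequence.IsWeaklyRegular.of_flat_module (N : Type*) [AddCommGroup N]
    [Module R N] [Module.Flat R N] {rs : List R} (h : IsWeaklyRegular R rs) :
    IsWeaklyRegular N rs :=
  ((TensorProduct.rid R N).isWeaklyRegular_congr rs).mp (h.isWeaklyRegular_lTensor (M₂ := N))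

variable [IsLocalRing R] [IsNoetherianRing R] {m : ℕ} {h : Fin m → R}
  (N : Type*) [AddCommGroup N] [Module R N] [Module.Flat R N]

theorem RingTheory.Sequence.IsRegular.isSMulRegular_quotSMulTop_of_ne
    (hreg : IsRegular R (List.ofFn h)) {i j : Fin m} (hij : i ≠ j) :
    IsSMulRegular (QuotSMulTop (h i) N) (h j) := by
  have hj : j ∈ (List.finRange m).erase i :=
    (List.mem_erase_of_ne hij.symm).mpr (List.mem_finRange j)
  have hperm : (List.finRange m).Perm (i :: j :: ((List.finRange m).erase i).erase j) :=
    (List.perm_cons_erase (List.mem_finRange i)).trans ((List.perm_cons_erase hj).cons i)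
  have hw := ((IsLocalRing.isRegular_of_perm hreg
    (List.ofFn_eq_map ▸ hperm.map h)).toIsWeaklyRegular).of_flat_module N
  rw [List.map_cons, List.map_cons, isWeaklyRegular_cons_iff, isWeaklyRegular_cons_iff] at hw
  exact hw.2.1

theorem RingTheory.Sequence.IsRegular.isSMulRegular_quotSMulTop_prod_erase
    (hreg : IsRegular R (List.ofFn h)) (i : Fin m) :
    IsSMulRegular (QuotSMulTop (h i) N) (∏ j ∈ Finset.univ.erase i, h j) :=
  Finset.prod_induction _ _ (fun _ _ => IsSMulRegular.mul) (IsSMulRegular.one _)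
    fun _ hj => hreg.isSMulRegular_quotSMulTop_of_ne N (Finset.ne_of_mem_erase hj).symm

theorem RingTheory.Sequence.IsRegular.sum_prod_erase_smul_mem_smul_top_iff
    (hreg : IsRegular R (List.ofFn h)) (x : Fin m → N) :
    ∑ i, (∏ j ∈ Finset.univ.erase i, h j) • x i ∈ (∏ i, h i) • (⊤ : Submodule R N) ↔
      ∀ i, x i ∈ h i • (⊤ : Submodule R N) := by
  constructor
  · intro hsum i
    refine (hreg.isSMulRegular_quotSMulTop_prod_erase N i).mem_smul_top_of_smul_mem ?_
    obtain ⟨y, hy⟩ := Submodule.mem_smul_top_iff_exists_eq_smul.mp hsum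
    have hsum_i :
        ∑ j, (∏ l ∈ Finset.univ.erase j, h l) • x j ∈ h i • (⊤ : Submodule R N) :=
      hy ▸ Submodule.smul_mem_smul_top_of_dvd (Finset.dvd_prod_of_mem _ (Finset.mem_univ i)) y
    rw [← Finset.add_sum_erase _ _ (Finset.mem_univ i)] at hsum_i
    refine (Submodule.add_mem_iff_left _ (Submodule.sum_mem _ fun j hj => ?_)).mp hsum_i
    exact Submodule.smul_mem_smul_top_of_dvd (Finset.dvd_prod_of_mem h
      (Finset.mem_erase.mpr ⟨(Finset.ne_of_mem_erase hj).symm, Finset.mem_univ i⟩)) _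
  · intro hx
    refine Submodule.sum_mem _ fun i _ => ?_
    obtain ⟨y, hy⟩ := Submodule.mem_smul_top_iff_exists_eq_smul.mp (hx i)
    rw [hy, smul_smul, Finset.prod_erase_mul _ _ (Finset.mem_univ i)]
    exact Submodule.smul_mem_pointwise_smul _ _ _ trivial

end RegularSequence

/-- **Saito's normal crossing condition, Definition 92 / Remark 25(1)** (Schulze).
Let `R` be a commutative (local Noetherian, e.g. convergent power series) `k`-algebra,
`h 0, …, h (m-1)` an `R`-regular sequence with product `H`, and let the exterior algebra
`E = Λ Ω_{R/k}` of Kähler differentials be free over `R` (e.g. `Ω_{R/k}` free).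
For `ω = η / H ∈ H⁻¹ E`, the condition `dH ∧ ω ∈ E` (i.e. `dH ∧ η ∈ H·E`)
holds if and only if `dhᵢ ∧ ω ∈ (hᵢ/H)·E` (i.e. `dhᵢ ∧ η ∈ hᵢ·E`) for all `i`.
Hence the two defining conditions of logarithmic differential forms along `⟨H⟩` agree. -/
theorem saito_log_forms_product_characterization
    (k R : Type*) [CommRing k] [CommRing R] [Algebra k R]
    [IsLocalRing R] [IsNoetherianRing R]
    (m : ℕ) (h : Fin m → R)
    (hreg : RingTheory.Sequence.IsRegular R (List.ofFn h))
    [Module.Free R (KaehlerDifferential k R)]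
    (η : ExteriorAlgebra R (KaehlerDifferential k R)) :
    (∃ ξ : ExteriorAlgebra R (KaehlerDifferential k R),
        ExteriorAlgebra.ι R (KaehlerDifferential.D k R (∏ i, h i)) * η = (∏ i, h i) • ξ)
      ↔ (∀ i : Fin m, ∃ ξ : ExteriorAlgebra R (KaehlerDifferential k R),
        ExteriorAlgebra.ι R (KaehlerDifferential.D k R (h i)) * η = h i • ξ) := by
  have hleibniz : ExteriorAlgebra.ι R (KaehlerDifferential.D k R (∏ i, h i)) * η
      = ∑ i, (∏ j ∈ Finset.univ.erase i, h j) •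
          (ExteriorAlgebra.ι R (KaehlerDifferential.D k R (h i)) * η) := by
    simp only [Derivation.leibniz_prod, map_sum, map_smul, Finset.sum_mul, smul_mul_assoc]
  simpa only [← hleibniz, Submodule.mem_smul_top_iff_exists_eq_smul] using
    hreg.sum_prod_erase_smul_mem_smul_top_iff (ExteriorAlgebra R (KaehlerDifferential k R))
      fun i => ExteriorAlgebra.ι R (KaehlerDifferential.D k R (h i)) * η
end

section
/- Let A be a reduced ring with minimal primes p_1,...,p_s, a_I = ∩_{i∈I} p_i for I ⊆ {1,...,s}, and A_I = A/a_I. Then the natural surjection A_I ⊗_A Ω_A^p → Ω_{A_I}^p of universally finite differential modules has torsion kernel (as A_I-module). -/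
open scoped TensorProduct

/-
Pick `c ∈ A` that annihilates `a_I` but lies in none of the `p_i`, `i ∈ I`: in a reduced Noetherian
ring a minimal prime `p` is the annihilator of some `x`, and `x ∉ p` because `x² ≠ 0`, so prime
avoidance applies. The image of `c` in `A_I` is a non-zero-divisor. By the conormal sequence the
kernel of `A_I ⊗_A Ω_A → Ω_{A_I}` is the image of `a_I/a_I²`, hence is killed by `c`; so
`c · (1 ⊗ ι)` factors through `Ω_{A_I}` and extends to an algebra map
`Ψ : Λ Ω_{A_I} → A_I ⊗_A Λ Ω_A` with `Ψ ∘ Φ = c^p` on `A_I ⊗ Ω_A^p`. Thus `c^p` kills the kernel.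
-/

theorem Ideal.annihilator_not_le_of_mem_minimalPrimes {R : Type*} [CommRing R]
    [IsNoetherianRing R] [IsReduced R] {p : Ideal R} (hp : p ∈ minimalPrimes R) :
    ¬ Submodule.annihilator p ≤ p := by
  have hp' : p ∈ ((⊥ : Submodule R R).colon {1}).minimalPrimes := by
    convert hp
    ext r
    simp [Submodule.mem_colon_singleton]
  obtain ⟨x, hpx⟩ := Submodule.exists_eq_colon_of_mem_minimalPrimes hp'
  have hmem : ∀ {r}, r ∈ p ↔ r * x = 0 := by
    simp [hpx, Submodule.mem_colon_singleton]
  have hx : x ∈ Submodule.annihilator p :=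
    Submodule.mem_annihilator.mpr fun r hr => by rw [smul_eq_mul, mul_comm, hmem.mp hr]
  intro hle
  have hx0 : x = 0 := IsReduced.eq_zero x ⟨2, by rw [sq, ← hmem]; exact hle hx⟩
  exact hp.1.1.ne_top (Ideal.eq_top_of_isUnit_mem _ (hmem.mpr (by rw [hx0, mul_zero])) isUnit_one)

theorem Ideal.exists_mem_annihilator_sInf_forall_notMem {R : Type*} [CommRing R]
    [IsNoetherianRing R] [IsReduced R] {S : Set (Ideal R)} (hS : S ⊆ minimalPrimes R) :
    ∃ c ∈ Submodule.annihilator (sInf S), ∀ p ∈ S, c ∉ p := by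
  classical
  have hSfin : S.Finite := (minimalPrimes.finite_of_isNoetherianRing R).subset hS
  have hnot : ¬ (Submodule.annihilator (sInf S) : Set R) ⊆
      ⋃ p ∈ (hSfin.toFinset : Set (Ideal R)), p := by
    rw [Ideal.subset_union_prime ⊥ ⊥ fun p hp _ _ => (hS (hSfin.mem_toFinset.mp hp)).1.1]
    rintro ⟨p, hp, hle⟩
    rw [hSfin.mem_toFinset] at hp
    exact Ideal.annihilator_not_le_of_mem_minimalPrimes (hS hp)
      ((Submodule.annihilator_mono (sInf_le hp)).trans hle)
  obtain ⟨c, hc, hcS⟩ := Set.not_subset.mp hnot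
  simp only [Set.Finite.coe_toFinset, Set.mem_iUnion, not_exists] at hcS
  exact ⟨c, hc, hcS⟩

theorem Ideal.Quotient.mk_sInf_mem_nonZeroDivisors {R : Type*} [CommRing R]
    {S : Set (Ideal R)} (hS : ∀ p ∈ S, p.IsPrime) {c : R} (hc : ∀ p ∈ S, c ∉ p) :
    Ideal.Quotient.mk (sInf S) c ∈ nonZeroDivisors (R ⧸ sInf S) := by
  rw [mem_nonZeroDivisors_iff_right]
  intro b hb
  obtain ⟨b, rfl⟩ := Ideal.Quotient.mk_surjective b
  rw [← map_mul, Ideal.Quotient.eq_zero_iff_mem, Ideal.mem_sInf] at hb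
  rw [Ideal.Quotient.eq_zero_iff_mem, Ideal.mem_sInf]
  exact fun p hp => ((hS p hp).mem_or_mem (hb hp)).resolve_right (hc p hp)

theorem KaehlerDifferential.smul_eq_zero_of_mem_ker_mapBaseChange (R : Type*) {A B : Type*}
    [CommRing R] [CommRing A] [CommRing B] [Algebra R A] [Algebra A B] [Algebra R B]
    [IsScalarTower R A B] (h : Function.Surjective (algebraMap A B)) {c : A}
    (hc : c ∈ Submodule.annihilator (RingHom.ker (algebraMap A B)))
    {y : B ⊗[A] Ω[A⁄R]} (hy : y ∈ LinearMap.ker (mapBaseChange R A B)) :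
    algebraMap A B c • y = 0 := by
  rw [← Submodule.restrictScalars_mem A, ← range_kerCotangentToTensor R A B h] at hy
  obtain ⟨z, rfl⟩ := hy
  obtain ⟨w, rfl⟩ := Ideal.toCotangent_surjective _ z
  have hcw : c • w = 0 := Subtype.ext (Submodule.mem_annihilator.mp hc w w.2)
  rw [algebraMap_smul, ← map_smul, ← map_smul, hcw, map_zero, map_zero]

theorem LinearMap.exists_comp_eq_smul_of_surjective {R P N Q : Type*} [CommRing R]
    [AddCommGroup P] [Module R P] [AddCommGroup N] [Module R N] [AddCommGroup Q] [Module R Q]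
    {β : P →ₗ[R] N} (hβ : Function.Surjective β) {c : R} (hc : ∀ y ∈ ker β, c • y = 0)
    (j : P →ₗ[R] Q) : ∃ σ : N →ₗ[R] Q, σ ∘ₗ β = c • j :=
  ⟨(ker β).liftQ (c • j) (fun y hy => by
      rw [mem_ker, smul_apply, ← map_smul, hc y hy, map_zero]) ∘ₗ
      (β.quotKerEquivOfSurjective hβ).symm.toLinearMap,
    LinearMap.ext fun u => by simp [quotKerEquivOfSurjective_symm_apply]⟩

namespace ExteriorAlgebra

variable {R M : Type*} [CommRing R] [AddCommGroup M] [Module R M]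

theorem baseChange_ι_mul_self (B : Type*) [CommRing B] [Algebra R B] (u : B ⊗[R] M) :
    (ι R).baseChange B u * (ι R).baseChange B u = 0 := by
  set j := (ι R : M →ₗ[R] ExteriorAlgebra R M).baseChange B
  have anticomm : ∀ u w, j u * j w + j w * j u = 0 := by
    intro u w
    induction u using TensorProduct.induction_on with
    | zero => simp
    | add u₁ u₂ h₁ h₂ => rw [map_add, add_mul, mul_add, add_add_add_comm, h₁, h₂, add_zero]
    | tmul b m =>
      induction w using TensorProduct.induction_on with
      | zero => simp
      | add w₁ w₂ h₁ h₂ => rw [map_add, mul_add, add_mul, add_add_add_comm, h₁, h₂, add_zero]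
      | tmul b' m' =>
        simp only [j, LinearMap.baseChange_tmul, Algebra.TensorProduct.tmul_mul_tmul]
        rw [mul_comm b', ← TensorProduct.tmul_add, ι_add_mul_swap, TensorProduct.tmul_zero]
  induction u using TensorProduct.induction_on with
  | zero => simp
  | tmul b m => simp [j]
  | add u w hu hw => rw [map_add, add_mul, mul_add, mul_add, hu, hw, zero_add, add_zero, anticomm]

theorem algHom_eq_pow_smul_of_mem_exteriorPower {B C : Type*} [CommSemiring B] [Ring C]
    [Algebra R C] [Algebra B C] {θ φ : ExteriorAlgebra R M →ₐ[R] C} {c : B}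
    (h : ∀ m, θ (ι R m) = c • φ (ι R m)) {n : ℕ} {x : ExteriorAlgebra R M}
    (hx : x ∈ ⋀[R]^n M) : θ x = c ^ n • φ x := by
  induction hx using Submodule.pow_induction_on_left' with
  | algebraMap r => simp
  | add x y n _ _ hx hy => rw [map_add, map_add, hx, hy, smul_add]
  | mem_mul m hm n x _ hx =>
    obtain ⟨m, rfl⟩ := hm
    rw [map_mul, map_mul, h, hx, smul_mul_smul_comm, pow_succ']

variable {B N : Type*} [CommRing B] [Algebra R B] [AddCommGroup N] [Module B N]
  [Algebra R (ExteriorAlgebra B N)] [IsScalarTower R B (ExteriorAlgebra B N)]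

theorem pow_smul_eq_zero_of_liftBaseChange_eq_zero {β : B ⊗[R] M →ₗ[B] N}
    (hβ : Function.Surjective β) {c : B} (hc : ∀ y ∈ LinearMap.ker β, c • y = 0)
    {g : ExteriorAlgebra R M →ₐ[R] ExteriorAlgebra B N} (hg : ∀ m, g (ι R m) = ι B (β (1 ⊗ₜ m)))
    {p : ℕ} {x : B ⊗[R] ExteriorAlgebra R M} (hx : x ∈ (⋀[R]^p M).baseChange B)
    (hgx : g.toLinearMap.liftBaseChange B x = 0) : c ^ p • x = 0 := by
  obtain ⟨σ, hσ⟩ := LinearMap.exists_comp_eq_smul_of_surjective hβ hc ((ι R).baseChange B)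
  have hσβ : ∀ u, σ (β u) = c • (ι R).baseChange B u := LinearMap.congr_fun hσ
  have hσsq : ∀ n, σ n * σ n = 0 := by
    intro n
    obtain ⟨u, rfl⟩ := hβ n
    rw [hσβ, smul_mul_smul_comm, baseChange_ι_mul_self, smul_zero]
  set Ψ := lift B ⟨σ, hσsq⟩
  have hΨg : ∀ m ∈ ⋀[R]^p M, Ψ (g m) = c ^ p • (1 ⊗ₜ m : B ⊗[R] ExteriorAlgebra R M) :=
    fun m hm => algHom_eq_pow_smul_of_mem_exteriorPower (θ := (Ψ.restrictScalars R).comp g)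
      (φ := Algebra.TensorProduct.includeRight) (fun m => by simp [Ψ, hg, hσβ]) hm
  have hle : (⋀[R]^p M).baseChange B ≤ LinearMap.eqLocus
      (Ψ.toLinearMap ∘ₗ g.toLinearMap.liftBaseChange B) (c ^ p • LinearMap.id) := by
    rw [Submodule.baseChange_eq_span, Submodule.span_le]
    rintro _ ⟨m, hm, rfl⟩
    simp [hΨg m hm]
  have hΨx := hle hx
  rw [LinearMap.mem_eqLocus, LinearMap.comp_apply, hgx, map_zero] at hΨx
  simpa using hΨx.symm

end ExteriorAlgebra

theorem quotient_by_minimal_primes_kaehler_baseChange_torsion_kernel_general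
    (k A : Type*) [Field k]
    [CommRing A] [Algebra k A] [IsReduced A] [IsNoetherianRing A]
    (S : Set (Ideal A)) (hS : S ⊆ minimalPrimes A) (aI : Ideal A) (haI : aI = sInf S) :
    letI B := A ⧸ aI
    letI : Algebra A (ExteriorAlgebra B (Ω[B⁄k])) :=
      RingHom.toAlgebra'
        ((algebraMap B (ExteriorAlgebra B (Ω[B⁄k]))).comp (algebraMap A B))
        (fun a x => Algebra.commutes (R := B) ((algebraMap A B) a) x)
    haveI : @IsScalarTower A B (ExteriorAlgebra B (Ω[B⁄k])) _ _ Algebra.toSMul :=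
      IsScalarTower.of_algebraMap_eq fun _ => rfl
    -- the natural `A`-algebra map `Λ_A Ω_A → Λ_{A_I} Ω_{A_I}`
    letI g : ExteriorAlgebra A (Ω[A⁄k]) →ₐ[A] ExteriorAlgebra B (Ω[B⁄k]) :=
      ExteriorAlgebra.lift A
        ⟨((ExteriorAlgebra.ι B).restrictScalars A) ∘ₗ KaehlerDifferential.map k k A B,
         fun m => ExteriorAlgebra.ι_sq_zero _⟩
    -- its base change `A_I ⊗_A Λ_A Ω_A → Λ_{A_I} Ω_{A_I}`
    letI Φ : B ⊗[A] ExteriorAlgebra A (Ω[A⁄k]) →ₗ[B] ExteriorAlgebra B (Ω[B⁄k]) :=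
      LinearMap.liftBaseChange B g.toLinearMap
    ∀ p : ℕ, ∀ x ∈ Submodule.baseChange B (⋀[A]^p (Ω[A⁄k])),
      Φ x = 0 → ∃ a ∈ nonZeroDivisors B, a • x = 0 := by
  subst haI
  obtain ⟨c, hc, hcS⟩ := Ideal.exists_mem_annihilator_sInf_forall_notMem hS
  intro p x hx hΦx
  have hsurj : Function.Surjective (algebraMap A (A ⧸ sInf S)) := Ideal.Quotient.mk_surjective
  refine ⟨Ideal.Quotient.mk _ c ^ p,
    pow_mem (Ideal.Quotient.mk_sInf_mem_nonZeroDivisors (fun q hq => (hS hq).1.1) hcS) p, ?_⟩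
  refine ExteriorAlgebra.pow_smul_eq_zero_of_liftBaseChange_eq_zero
    (KaehlerDifferential.mapBaseChange_surjective k A _ hsurj)
    (fun y hy => KaehlerDifferential.smul_eq_zero_of_mem_ker_mapBaseChange k hsurj ?_ hy)
    (fun m => ?_) hx hΦx
  · rwa [Ideal.Quotient.algebraMap_eq, Ideal.mk_ker]
  · rw [KaehlerDifferential.mapBaseChange_tmul, one_smul]
    exact ExteriorAlgebra.lift_ι_apply _ _ _ m

set_option maxHeartbeats 2000000 in
set_option synthInstance.maxHeartbeats 1000000 in
/-- **Lemma 52** (Schulze).  Let `A` be a reduced (equidimensional analytic) `k`-algebra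
(char `k = 0`) with minimal primes `p₁, …, p_s`, let `a_I = ⋂_{i ∈ I} p_i` be an
intersection of minimal primes and `A_I = A ⧸ a_I`.  Then for every `p` the natural
surjection `A_I ⊗_A Ω_A^p → Ω_{A_I}^p` (on `p`-th exterior powers of Kähler
differentials) has torsion kernel as an `A_I`-module. -/
theorem quotient_by_minimal_primes_kaehler_baseChange_torsion_kernel
    (k A : Type*) [Field k] [CharZero k]
    [CommRing A] [Algebra k A] [IsReduced A] [IsNoetherianRing A]
    (S : Set (Ideal A)) (hS : S ⊆ minimalPrimes A) (aI : Ideal A) (haI : aI = sInf S) :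
    letI B := A ⧸ aI
    letI : Algebra A (ExteriorAlgebra B (Ω[B⁄k])) :=
      RingHom.toAlgebra'
        ((algebraMap B (ExteriorAlgebra B (Ω[B⁄k]))).comp (algebraMap A B))
        (fun a x => Algebra.commutes (R := B) ((algebraMap A B) a) x)
    haveI : @IsScalarTower A B (ExteriorAlgebra B (Ω[B⁄k])) _ _ Algebra.toSMul :=
      IsScalarTower.of_algebraMap_eq fun _ => rfl
    -- the natural `A`-algebra map `Λ_A Ω_A → Λ_{A_I} Ω_{A_I}`
    letI g : ExteriorAlgebra A (Ω[A⁄k]) →ₐ[A] ExteriorAlgebra B (Ω[B⁄k]) :=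
      ExteriorAlgebra.lift A
        ⟨((ExteriorAlgebra.ι B).restrictScalars A) ∘ₗ KaehlerDifferential.map k k A B,
         fun m => ExteriorAlgebra.ι_sq_zero _⟩
    -- its base change `A_I ⊗_A Λ_A Ω_A → Λ_{A_I} Ω_{A_I}`
    letI Φ : B ⊗[A] ExteriorAlgebra A (Ω[A⁄k]) →ₗ[B] ExteriorAlgebra B (Ω[B⁄k]) :=
      LinearMap.liftBaseChange B g.toLinearMap
    ∀ p : ℕ, ∀ x ∈ Submodule.baseChange B (⋀[A]^p (Ω[A⁄k])),
      Φ x = 0 → ∃ a ∈ nonZeroDivisors B, a • x = 0 :=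
  quotient_by_minimal_primes_kaehler_baseChange_torsion_kernel_general k A S hS aI haI
end

section
/- Let A → A_I = A/a_I be the projection onto a union of branches (a_I an intersection of minimal primes of the reduced curve A), and suppose δ_I ∈ Der(A_I) lifts to δ ∈ Der(A) preserving a_I. If δ(x) ∈ C_{Ã/A} for all x ∈ A, then δ_I(x_I) ∈ C_{Ã_I/A_I} for all x_I ∈ A_I. In other words, the condition Der(A) = Der(A, C_{Ã/A}) descends from A to A_I (for liftable derivations). -/
/-- **Remark 19(2)** (Schulze).  Let `π : A ↠ A_I = A/a_I` be the projection of a reduced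
curve `A` onto a union of branches (`a_I` an intersection of minimal primes), with
compatible normalizations `ν : A → Ã`, `ν_I : A_I → Ã_I` and surjection `π' : Ã ↠ Ã_I`
extending `π` (so `ν_I ∘ π = π' ∘ ν`).  Suppose the derivation `δ_I ∈ Der(A_I)` lifts to
`δ ∈ Der(A)` along `π`.  If `δ(x) ∈ C_{Ã/A}` for all `x ∈ A` (conductor condition
`Der(A) = Der(A, C_{Ã/A})`), then `δ_I(x_I) ∈ C_{Ã_I/A_I}` for all `x_I ∈ A_I`:
the condition descends from `A` to `A_I`. -/
theorem conductor_derivation_condition_descends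
    (k A B AI BI : Type*) [Field k] [CharZero k]
    [CommRing A] [CommRing B] [CommRing AI] [CommRing BI]
    [Algebra k A] [Algebra k B] [Algebra k AI] [Algebra k BI]
    (ν : A →+* B) (νI : AI →+* BI) (π : A →+* AI) (π' : B →+* BI)
    (hπ : Function.Surjective π) (hπ' : Function.Surjective π')
    (hsq : ∀ a : A, νI (π a) = π' (ν a))
    (δ : Derivation k A A) (δI : Derivation k AI AI)
    (hlift : ∀ a : A, δI (π a) = π (δ a))
    (hcond : ∀ x : A, ∀ b : B, ν (δ x) * b ∈ Set.range ν) :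
    ∀ xI : AI, ∀ bI : BI, νI (δI xI) * bI ∈ Set.range νI := by
  intro xI bI
  obtain ⟨a, rfl⟩ := hπ xI
  obtain ⟨b, rfl⟩ := hπ' bI
  obtain ⟨c, hc⟩ := hcond a b
  exact ⟨π c, by rw [hsq, hlift, hsq, ← map_mul, hc]⟩
end

section
/- Let D = D_1 ∪ D_2 be a reduced hypersurface singularity in (ℂ^{r+1},0) that is free (its Jacobian ideal J_D is a maximal Cohen–Macaulay / reflexive fractional ideal). If the inclusion of fractional ideals J_D ⊆ J_{D_1} ⊕ J_{D_2} dualizes to an equality σ^0_{D_1} ⊕ σ^0_{D_2} = σ^0_D of the inverse fractional ideals (where σ^0_X = J_X^{-1} by duality), then J_D = J_{D_1} ⊕ J_{D_2}. In particular, for free divisors, equality of the dual fractional ideals (J_{D_i})^{-1} with (J_D)^{-1} implies equality of the Jacobian ideals themselves, i.e. D is splayed. -/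
set_option maxHeartbeats 1000000 in
/-- **Proposition on splayed divisors (§ Splayed divisors)** (Schulze, after Aluffi–Faber).
Let `D = D₁ ∪ D₂` be a reduced free hypersurface singularity, `A = O_D` with total ring
of fractions `L = Q(O_D)`.  Let `J = J_D` be its Jacobian ideal, a fractional ideal
containing a nonzerodivisor which is reflexive by freeness (`J = (J⁻¹)⁻¹`, duals taken as
`I⁻¹ = {x ∈ L : x·I ⊆ O_D}`), and let `K = J_{D₁} ⊕ J_{D₂} ⊇ J` be the sum of the
Jacobian ideals of the components.  If the dual fractional ideals agree,
`J⁻¹ = σ⁰_D = σ⁰_{D₁} ⊕ σ⁰_{D₂} = K⁻¹`, then `J = K`; by the Aluffi–Faber criterion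
`J_D = J_{D₁} ⊕ J_{D₂}` this means that `D` is splayed. -/
theorem free_divisor_dual_equality_implies_splayed
    (A : Type*) [CommRing A] [IsReduced A] [IsNoetherianRing A]
    (J K : Submodule A (FractionRing A))
    (hJnzd : ∃ a ∈ nonZeroDivisors A, algebraMap A (FractionRing A) a ∈ J)
    (hle : J ≤ K)
    -- freeness: `J` is reflexive, `J = (J⁻¹)⁻¹`
    (hrefl : ∀ x : FractionRing A, x ∈ J ↔
      (∀ y : FractionRing A,
        (∀ z ∈ J, y * z ∈ (algebraMap A (FractionRing A)).range) →
        x * y ∈ (algebraMap A (FractionRing A)).range))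
    -- equality of the dual fractional ideals `σ⁰`: `J⁻¹ = K⁻¹`
    (hdual : ∀ y : FractionRing A,
      (∀ z ∈ J, y * z ∈ (algebraMap A (FractionRing A)).range) ↔
      (∀ z ∈ K, y * z ∈ (algebraMap A (FractionRing A)).range)) :
    J = K := by
  refine le_antisymm hle fun x hx => ?_
  rw [hrefl]
  intro y hy
  simpa [mul_comm] using ((hdual y).mp hy) x hx
end
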